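/- Let Λ ⊆ ℝⁿ be a lattice with successive minima λ₁ ≤ λ₂ ≤ … ≤ λₙ with respect to the closed unit ball centered at the origin. Then there exists a ℤ-basis v₁, …, vₙ of Λ such that ‖vᵢ‖ ≤ i · λᵢ for every i = 1, …, n. -/

import Mathlib

open MeasureTheory

/-- The `i`-th successive minimum of a set `Λ ⊆ ℝⁿ` with respect to the
closed unit ball centered at the origin: the infimum of radii `r > 0` such that the closed
ball of radius `r` contains `i + 1` linearly independent elements of `Λ`. -/
noncomputable def succMin (n : ℕ) (Λ : Set (EuclideanSpace ℝ (Fin n))) (i : Fin n) : ℝ :=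
  sInf {r : ℝ | 0 < r ∧ ∃ w : Fin ((i : ℕ) + 1) → EuclideanSpace ℝ (Fin n),
    (∀ k, w k ∈ Λ) ∧ LinearIndependent ℝ w ∧ ∀ k, ‖w k‖ ≤ r}

/-!
Pick linearly independent lattice vectors `b₀, …, bₙ₋₁` with `‖bᵢ‖ ≤ λᵢ` (the minima are attained
because a discrete subgroup meets each ball in a finite set) and put
`Λₖ = Λ ∩ span ℝ {b₀, …, bₖ₋₁}`. The `k`-th coordinate with respect to `b` maps `Λₖ₊₁` onto a
subgroup of `ℝ` with kernel `Λₖ`. Reducing the first `k` coordinates modulo `Λₖ` shows that this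
subgroup meets `(0, 1)` in a finite set, so it is cyclic and `Λₖ₊₁ = Λₖ + ℤ x`. Since `bₖ ∈ Λₖ₊₁`
has coordinate `1`, the coordinate of `x` is `1 / d` for an integer `d`; reducing `x` modulo `Λₖ`
puts all its coordinates in `[-1, 1]`, whence `‖x‖ ≤ ‖b₀‖ + ⋯ + ‖bₖ‖ ≤ (k + 1) λₖ`.
-/

open Submodule Module Set

namespace Module.Basis

theorem mem_flag_iff_repr_eq_zero {R M : Type*} [Semiring R] [AddCommMonoid M] [Module R M]
    {n : ℕ} (b : Basis (Fin n) R M) {k : Fin (n + 1)} {y : M} :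
    y ∈ b.flag k ↔ ∀ i, k ≤ i.castSucc → b.repr y i = 0 := by
  rw [flag, mem_span_image]
  refine ⟨fun h i hi => ?_, fun h i hi => ?_⟩
  · by_contra hne
    exact (h (Finsupp.mem_support_iff.mpr hne)).not_ge hi
  · by_contra hlt
    exact Finsupp.mem_support_iff.mp hi (h i (not_lt.mp hlt))

variable {E : Type*} [NormedAddCommGroup E] [NormedSpace ℝ E]

theorem norm_le_sum_norm_of_abs_repr_le_one {ι : Type*} [Fintype ι] (b : Basis ι ℝ E)
    (s : Finset ι) {y : E} (hy₀ : ∀ i ∉ s, b.repr y i = 0) (hy₁ : ∀ i, |b.repr y i| ≤ 1) :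
    ‖y‖ ≤ ∑ i ∈ s, ‖b i‖ :=
  calc ‖y‖ = ‖∑ i ∈ s, b.repr y i • b i‖ := by
        rw [Finset.sum_subset (Finset.subset_univ s) fun i _ hi => by simp [hy₀ i hi], b.sum_repr]
    _ ≤ ∑ i ∈ s, ‖b.repr y i • b i‖ := norm_sum_le _ _
    _ ≤ ∑ i ∈ s, ‖b i‖ := Finset.sum_le_sum fun i _ => by
        rw [_root_.norm_smul, Real.norm_eq_abs]
        exact mul_le_of_le_one_left (norm_nonneg _) (hy₁ i)

theorem exists_repr_sub_eq_fract {n : ℕ} (b : Basis (Fin n) ℝ E) (k : Fin (n + 1)) (y : E) :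
    ∃ m ∈ span ℤ (b '' {i | i.castSucc < k}), ∀ i,
      b.repr (y - m) i = if i.castSucc < k then Int.fract (b.repr y i) else b.repr y i := by
  classical
  let z : Fin n → ℤ := fun i => if i.castSucc < k then ⌊b.repr y i⌋ else 0
  refine ⟨∑ i, (z i : ℝ) • b i, sum_mem fun i _ => ?_, fun i => ?_⟩
  · rw [Int.cast_smul_eq_zsmul]
    by_cases hi : i.castSucc < k
    · exact zsmul_mem (subset_span (mem_image_of_mem b hi)) _
    · simp [z, hi]
  · rw [map_sub, Finsupp.sub_apply, b.repr_sum_self]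
    by_cases hi : i.castSucc < k <;> simp [z, hi, Int.self_sub_floor]

end Module.Basis

theorem AddSubgroup.exists_eq_closure_of_finite_inter_Ioo {H : AddSubgroup ℝ}
    (hH : ((H : Set ℝ) ∩ Ioo 0 1).Finite) : ∃ a, H = AddSubgroup.closure {a} := by
  have hnhds : ((H : Set ℝ) ∩ Ioo 0 1)ᶜ ∈ nhds (0 : ℝ) :=
    hH.isClosed.isOpen_compl.mem_nhds fun h => lt_irrefl _ h.2.1
  obtain ⟨ε, hε, hball⟩ := Metric.mem_nhds_iff.mp hnhds
  refine AddSubgroup.cyclic_of_isolated_zero (lt_min hε one_pos) ?_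
  refine Set.disjoint_left.mpr fun g hg hgI =>
    hball ?_ ⟨hg, hgI.1, hgI.2.trans_le (min_le_right _ _)⟩
  rw [Metric.mem_ball, Real.dist_0_eq_abs, abs_of_pos hgI.1]
  exact hgI.2.trans_le (min_le_left _ _)

theorem Submodule.finite_inter_closedBall {E : Type*} [NormedAddCommGroup E] [ProperSpace E]
    (Λ : Submodule ℤ E) [DiscreteTopology Λ] (r : ℝ) :
    ((Λ : Set E) ∩ Metric.closedBall 0 r).Finite := by
  have : DiscreteTopology Λ.toAddSubgroup := ‹DiscreteTopology Λ›
  rw [inter_comm]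
  exact Metric.finite_isBounded_inter_isClosed DiscreteTopology.isDiscrete
    Metric.isBounded_closedBall Λ.toAddSubgroup.isClosed_of_discrete

section LatticeFlag

variable {E : Type*} [NormedAddCommGroup E] [NormedSpace ℝ E] {n : ℕ}

def latticeFlag (Λ : Submodule ℤ E) (b : Basis (Fin n) ℝ E) (k : Fin (n + 1)) :
    Submodule ℤ E :=
  Λ ⊓ (b.flag k).restrictScalars ℤ

variable {Λ : Submodule ℤ E} {b : Basis (Fin n) ℝ E}

theorem latticeFlag_mono : Monotone (latticeFlag Λ b) :=
  fun _ _ h => inf_le_inf_left Λ (restrictScalars_mono ℤ (b.flag_mono h))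

theorem mem_latticeFlag_castSucc_iff {k : Fin n} {y : E} (hy : y ∈ latticeFlag Λ b k.succ) :
    y ∈ latticeFlag Λ b k.castSucc ↔ b.repr y k = 0 := by
  have hy' := b.mem_flag_iff_repr_eq_zero.mp hy.2
  simp only [latticeFlag, mem_inf, restrictScalars_mem, b.mem_flag_iff_repr_eq_zero,
    Fin.castSucc_le_castSucc_iff, Fin.succ_le_castSucc_iff] at hy' ⊢
  refine ⟨fun h => h.2 k le_rfl, fun h => ⟨hy.1, fun i hi => ?_⟩⟩
  rcases hi.eq_or_lt with rfl | hlt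
  exacts [h, hy' i hlt]

theorem span_image_le_latticeFlag (hb : ∀ i, b i ∈ Λ) (k : Fin (n + 1)) :
    span ℤ (b '' {i | i.castSucc < k}) ≤ latticeFlag Λ b k :=
  le_inf (span_le.mpr (image_subset_iff.mpr fun i _ => hb i)) (span_le_restrictScalars ℤ ℝ _)

theorem exists_sub_mem_latticeFlag_abs_repr_le_one (hb : ∀ i, b i ∈ Λ) {k : Fin n} {y : E}
    (hy : y ∈ latticeFlag Λ b k.succ) (hyk : |b.repr y k| ≤ 1) :
    ∃ m ∈ latticeFlag Λ b k.castSucc, b.repr (y - m) k = b.repr y k ∧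
      ∀ i, |b.repr (y - m) i| ≤ 1 := by
  obtain ⟨m, hm, hrepr⟩ := b.exists_repr_sub_eq_fract k.castSucc y
  refine ⟨m, span_image_le_latticeFlag hb _ hm, by rw [hrepr, if_neg (lt_irrefl _)], fun i => ?_⟩
  rw [hrepr]
  rcases lt_trichotomy i k with hlt | rfl | hgt
  · rw [if_pos (Fin.castSucc_lt_castSucc_iff.mpr hlt), abs_of_nonneg (Int.fract_nonneg _)]
    exact (Int.fract_lt_one _).le
  · simpa using hyk
  · rw [if_neg (by simpa using hgt.le.not_gt),
      b.mem_flag_iff_repr_eq_zero.mp hy.2 i (Fin.succ_le_castSucc_iff.mpr hgt), abs_zero]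
    exact zero_le_one

variable [FiniteDimensional ℝ E] [DiscreteTopology Λ]

theorem exists_mem_latticeFlag_repr_eq_int_mul (hb : ∀ i, b i ∈ Λ) (k : Fin n) :
    ∃ x ∈ latticeFlag Λ b k.succ,
      ∀ y ∈ latticeFlag Λ b k.succ, ∃ d : ℤ, b.repr y k = d * b.repr x k := by
  set N := latticeFlag Λ b k.succ
  let H : AddSubgroup ℝ := (N.map ((b.coord k).restrictScalars ℤ)).toAddSubgroup
  have hH : ∀ g, g ∈ H ↔ ∃ y ∈ N, b.repr y k = g := fun g => by simp [H]
  -- a value in `(0, 1)` is the `k`-th coordinate of a reduced vector of `N`, and these are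
  -- finitely many lattice points in a ball
  have hfin : ((H : Set ℝ) ∩ Ioo 0 1).Finite := by
    refine ((Λ.finite_inter_closedBall (∑ i, ‖b i‖)).image (fun y => b.repr y k)).subset ?_
    rintro g ⟨hg, hg01⟩
    obtain ⟨y, hy, rfl⟩ := (hH g).mp hg
    obtain ⟨m, hm, hmk, hm1⟩ := exists_sub_mem_latticeFlag_abs_repr_le_one hb hy
      (by rw [abs_of_pos hg01.1]; exact hg01.2.le)
    refine ⟨y - m, ⟨Λ.sub_mem hy.1 hm.1, mem_closedBall_zero_iff.mpr ?_⟩, hmk⟩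
    exact b.norm_le_sum_norm_of_abs_repr_le_one _ (fun i hi => absurd (Finset.mem_univ i) hi) hm1
  obtain ⟨a, hHa⟩ := AddSubgroup.exists_eq_closure_of_finite_inter_Ioo hfin
  obtain ⟨x, hx, hxa⟩ := (hH a).mp (hHa ▸ AddSubgroup.mem_closure_singleton_self a)
  refine ⟨x, hx, fun y hy => ?_⟩
  obtain ⟨d, hd⟩ := AddSubgroup.mem_closure_singleton.mp (hHa ▸ (hH _).mpr ⟨y, hy, rfl⟩)
  exact ⟨d, by rw [hxa, ← hd, zsmul_eq_mul]⟩

theorem exists_latticeFlag_succ_eq_sup_span_singleton (hb : ∀ i, b i ∈ Λ) (k : Fin n) :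
    ∃ x ∈ latticeFlag Λ b k.succ,
      latticeFlag Λ b k.succ = latticeFlag Λ b k.castSucc ⊔ ℤ ∙ x ∧ ∀ i, |b.repr x i| ≤ 1 := by
  set N := latticeFlag Λ b k.succ
  set M := latticeFlag Λ b k.castSucc
  have hMN : M ≤ N := latticeFlag_mono Fin.castSucc_lt_succ.le
  obtain ⟨x₀, hx₀, hmul⟩ := exists_mem_latticeFlag_repr_eq_int_mul hb k
  have hx₀k : |b.repr x₀ k| ≤ 1 := by
    obtain ⟨d, hd⟩ := hmul (b k) ⟨hb k, b.self_mem_flag Fin.castSucc_lt_succ⟩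
    rw [b.repr_self, Finsupp.single_eq_same] at hd
    have hd0 : d ≠ 0 := by rintro rfl; simp at hd
    calc |b.repr x₀ k| ≤ |(d : ℝ)| * |b.repr x₀ k| :=
          le_mul_of_one_le_left (abs_nonneg _) (by exact_mod_cast Int.one_le_abs hd0)
      _ = 1 := by rw [← abs_mul, ← hd, abs_one]
  obtain ⟨m, hm, hmk, hm1⟩ := exists_sub_mem_latticeFlag_abs_repr_le_one hb hx₀ hx₀k
  have hx : x₀ - m ∈ N := N.sub_mem hx₀ (hMN hm)
  refine ⟨x₀ - m, hx, le_antisymm (fun y hy => ?_)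
    (sup_le hMN ((span_singleton_le_iff_mem _ _).mpr hx)), hm1⟩
  obtain ⟨d, hd⟩ := hmul y hy
  have hrest : y - d • (x₀ - m) ∈ M := by
    refine (mem_latticeFlag_castSucc_iff (N.sub_mem hy (zsmul_mem hx d))).mpr ?_
    rw [map_sub, map_zsmul, Finsupp.sub_apply, Finsupp.smul_apply, hmk, hd, zsmul_eq_mul,
      sub_self]
  rw [← sub_add_cancel y (d • (x₀ - m))]
  exact add_mem (mem_sup_left hrest) (mem_sup_right (zsmul_mem (mem_span_singleton_self _) d))

theorem exists_span_image_eq_latticeFlag (hb : ∀ i, b i ∈ Λ) (k : Fin (n + 1)) :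
    ∃ w : Fin n → E, span ℤ (w '' {i | i.castSucc < k}) = latticeFlag Λ b k ∧
      ∀ i, i.castSucc < k → w i ∈ b.flag i.succ ∧ ∀ j, |b.repr (w i) j| ≤ 1 := by
  classical
  induction k using Fin.induction with
  | zero => exact ⟨0, by simp [latticeFlag], fun i hi => absurd hi (Fin.not_lt_zero _)⟩
  | succ k ih =>
    obtain ⟨w, hw, hwb⟩ := ih
    obtain ⟨x, hx, hsup, hx1⟩ := exists_latticeFlag_succ_eq_sup_span_singleton hb k
    have hset : {i : Fin n | i.castSucc < k.succ} = insert k {i | i.castSucc < k.castSucc} := by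
      ext i
      simp [le_iff_eq_or_lt]
    refine ⟨Function.update w k x, ?_, fun i hi => ?_⟩
    · have himg : Function.update w k x '' {i | i.castSucc < k.castSucc} =
          w '' {i | i.castSucc < k.castSucc} :=
        image_congr fun i hi => Function.update_of_ne (Fin.castSucc_lt_castSucc_iff.mp hi).ne _ _
      rw [hset, image_insert_eq, himg, span_insert, Function.update_self, hw, hsup, sup_comm]
    · rcases (Fin.castSucc_lt_succ_iff.mp hi).eq_or_lt with rfl | hlt
      · rw [Function.update_self]
        exact ⟨hx.2, hx1⟩
      · rw [Function.update_of_ne hlt.ne]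
        exact hwb i (Fin.castSucc_lt_castSucc_iff.mpr hlt)

theorem exists_span_eq_abs_repr_le_one (hb : ∀ i, b i ∈ Λ) :
    ∃ w : Fin n → E, span ℤ (range w) = Λ ∧
      ∀ i, w i ∈ b.flag i.succ ∧ ∀ j, |b.repr (w i) j| ≤ 1 := by
  obtain ⟨w, hw, hwb⟩ := exists_span_image_eq_latticeFlag hb (Fin.last n)
  refine ⟨w, ?_, fun i => hwb i (Fin.castSucc_lt_last i)⟩
  simpa [Fin.castSucc_lt_last, latticeFlag] using hw

theorem exists_span_eq_norm_le (hb : ∀ i, b i ∈ Λ) {c : Fin n → ℝ} (hc : Monotone c)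
    (hbc : ∀ i, ‖b i‖ ≤ c i) :
    ∃ w : Fin n → E, span ℤ (range w) = Λ ∧ LinearIndependent ℤ w ∧
      ∀ i, ‖w i‖ ≤ ((i : ℕ) + 1) * c i := by
  obtain ⟨w, hw, hwb⟩ := exists_span_eq_abs_repr_le_one hb
  refine ⟨w, hw, ?_, fun i => ?_⟩
  · have hspan : ⊤ ≤ span ℝ (range w) := by
      rw [← b.span_eq, span_le, range_subset_iff]
      intro i
      exact span_le_restrictScalars ℤ ℝ _ (hw ▸ hb i)
    exact (linearIndependent_of_top_le_span_of_card_eq_finrank hspan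
      (by rw [Fintype.card_fin, finrank_eq_card_basis b, Fintype.card_fin])).restrict_scalars' ℤ
  · calc ‖w i‖ ≤ ∑ j ∈ Finset.Iic i, ‖b j‖ :=
          b.norm_le_sum_norm_of_abs_repr_le_one _ (fun j hj => b.mem_flag_iff_repr_eq_zero.mp
            (hwb i).1 j (Fin.succ_le_castSucc_iff.mpr (not_le.mp (by simpa using hj)))) (hwb i).2
      _ ≤ ∑ _j ∈ Finset.Iic i, c i :=
          Finset.sum_le_sum fun j hj => (hbc j).trans (hc (Finset.mem_Iic.mp hj))
      _ = ((i : ℕ) + 1) * c i := by simp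

end LatticeFlag

theorem exists_linearIndependent_forall_mem_range {K V : Type*} [DivisionRing K] [AddCommGroup V]
    [Module K V] : ∀ {n : ℕ} (z : ∀ i : Fin n, Fin ((i : ℕ) + 1) → V),
      (∀ i, LinearIndependent K (z i)) →
      ∃ u : Fin n → V, LinearIndependent K u ∧ ∀ i, u i ∈ range (z i)
  | 0, _, _ => ⟨Fin.elim0, linearIndependent_empty_type, fun i => i.elim0⟩
  | n + 1, z, hz => by
    obtain ⟨u, hu, hur⟩ :=
      exists_linearIndependent_forall_mem_range (fun i => z i.castSucc) fun i => hz _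
    obtain ⟨j, hj⟩ : ∃ j, z (Fin.last n) j ∉ span K (range u) := by
      classical
      by_contra! h
      have hcard :=
        linearIndependent_le_span' _ (hz (Fin.last n)) (range u) (range_subset_iff.mpr h)
      rw [Cardinal.mk_fintype, Nat.cast_le, Fintype.card_fin, Fin.val_last] at hcard
      have := Fintype.card_range_le u
      rw [Fintype.card_fin] at this
      omega
    refine ⟨Fin.snoc u (z (Fin.last n) j), linearIndependent_finSnoc.mpr ⟨hu, hj⟩,
      Fin.lastCases ?_ fun i => ?_⟩
    · simp
    · simpa using hur i

section SuccessiveMinima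

variable {n : ℕ}

def succMinSet (n : ℕ) (Λ : Set (EuclideanSpace ℝ (Fin n))) (i : Fin n) : Set ℝ :=
  {r : ℝ | 0 < r ∧ ∃ w : Fin ((i : ℕ) + 1) → EuclideanSpace ℝ (Fin n),
    (∀ k, w k ∈ Λ) ∧ LinearIndependent ℝ w ∧ ∀ k, ‖w k‖ ≤ r}

theorem succMinSet_nonempty {Λ : Set (EuclideanSpace ℝ (Fin n))}
    (b : Basis (Fin n) ℝ (EuclideanSpace ℝ (Fin n))) (hb : ∀ i, b i ∈ Λ) (i : Fin n) :
    (succMinSet n Λ i).Nonempty :=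
  ⟨1 + ∑ j, ‖b j‖, by positivity, b ∘ Fin.castLE i.2, fun _ => hb _,
    b.linearIndependent.comp _ (Fin.castLE_injective _), fun k =>
      (Finset.single_le_sum (fun j _ => norm_nonneg (b j)) (Finset.mem_univ _)).trans
        (le_add_of_nonneg_left zero_le_one)⟩

theorem succMinSet_antitone (Λ : Set (EuclideanSpace ℝ (Fin n))) :
    Antitone (succMinSet n Λ) := by
  rintro i i' h r ⟨hr, w, hwΛ, hw, hwr⟩
  have hle : (i : ℕ) + 1 ≤ (i' : ℕ) + 1 := Nat.succ_le_succ h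
  exact ⟨hr, w ∘ Fin.castLE hle, fun _ => hwΛ _, hw.comp _ (Fin.castLE_injective _),
    fun _ => hwr _⟩

theorem succMin_mono {Λ : Set (EuclideanSpace ℝ (Fin n))}
    (hne : ∀ i, (succMinSet n Λ i).Nonempty) : Monotone (succMin n Λ) :=
  fun _ _ h => csInf_le_csInf ⟨0, fun _ hr => hr.1.le⟩ (hne _) (succMinSet_antitone Λ h)

theorem exists_linearIndependent_norm_le_succMin (Λ : Submodule ℤ (EuclideanSpace ℝ (Fin n)))
    [DiscreteTopology Λ] {i : Fin n} (hne : (succMinSet n Λ i).Nonempty) :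
    ∃ z : Fin ((i : ℕ) + 1) → EuclideanSpace ℝ (Fin n),
      (∀ k, z k ∈ Λ) ∧ LinearIndependent ℝ z ∧ ∀ k, ‖z k‖ ≤ succMin n Λ i := by
  set μ := succMin n Λ i
  let A := {z : Fin ((i : ℕ) + 1) → EuclideanSpace ℝ (Fin n) |
    (∀ k, z k ∈ (Λ : Set _) ∩ Metric.closedBall 0 (μ + 1)) ∧ LinearIndependent ℝ z}
  have hA : A.Finite :=
    (Set.Finite.pi' fun _ => Λ.finite_inter_closedBall (μ + 1)).subset fun _ hz => hz.1
  have hmemA : ∀ r ∈ succMinSet n Λ i, r ≤ μ + 1 → ∃ z ∈ A, ∀ k, ‖z k‖ ≤ r := by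
    rintro r ⟨-, z, hzΛ, hz, hzr⟩ hr
    exact ⟨z, ⟨fun k => ⟨hzΛ k, mem_closedBall_zero_iff.mpr ((hzr k).trans hr)⟩, hz⟩, hzr⟩
  have hAne : A.Nonempty := by
    obtain ⟨r, hr, hrμ⟩ := exists_lt_of_csInf_lt hne (lt_add_one μ)
    obtain ⟨z, hzA, -⟩ := hmemA r hr hrμ.le
    exact ⟨z, hzA⟩
  -- the least max-norm of a candidate family in the ball of radius `μ + 1` bounds the set
  -- defining `μ` from below
  let f : (Fin ((i : ℕ) + 1) → EuclideanSpace ℝ (Fin n)) → ℝ :=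
    fun z => Finset.univ.sup' Finset.univ_nonempty fun k => ‖z k‖
  obtain ⟨z, hzA, hzmin⟩ := A.exists_min_image f hA hAne
  have hfz : f z ≤ μ := le_csInf hne fun r hr => by
    rcases le_or_gt r (μ + 1) with hrμ | hrμ
    · obtain ⟨z', hz'A, hz'r⟩ := hmemA r hr hrμ
      exact (hzmin z' hz'A).trans (Finset.sup'_le _ _ fun k _ => hz'r k)
    · exact (Finset.sup'_le _ _ fun k _ => mem_closedBall_zero_iff.mp (hzA.1 k).2).trans hrμ.le
  exact ⟨z, fun k => (hzA.1 k).1, hzA.2, fun k => (Finset.le_sup' _ (Finset.mem_univ k)).trans hfz⟩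

end SuccessiveMinima

theorem stmt6 (n : ℕ) (v : Module.Basis (Fin n) ℝ (EuclideanSpace ℝ (Fin n))) :
    ∃ w : Fin n → EuclideanSpace ℝ (Fin n),
      (∀ i, w i ∈ Submodule.span ℤ (Set.range v)) ∧
      LinearIndependent ℤ w ∧
      Submodule.span ℤ (Set.range w) = Submodule.span ℤ (Set.range v) ∧
      ∀ i : Fin n, ‖w i‖ ≤ ((i : ℕ) + 1) *
        succMin n (Submodule.span ℤ (Set.range v) : Set (EuclideanSpace ℝ (Fin n))) i := by
  set Λ := span ℤ (range v)
  have hne : ∀ i, (succMinSet n Λ i).Nonempty :=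
    succMinSet_nonempty v fun i => subset_span (mem_range_self i)
  choose z hzΛ hz hzμ using fun i => exists_linearIndependent_norm_le_succMin Λ (hne i)
  obtain ⟨u, hu, hur⟩ := exists_linearIndependent_forall_mem_range z hz
  have huΛ : ∀ i, u i ∈ Λ ∧ ‖u i‖ ≤ succMin n Λ i := fun i => by
    obtain ⟨k, hk⟩ := hur i
    exact hk ▸ ⟨hzΛ i k, hzμ i k⟩
  obtain ⟨w, hw, hwli, hwμ⟩ :=
    exists_span_eq_norm_le (b := basisOfLinearIndependentOfCardEqFinrank' u hu (by simp))
      (by simpa using fun i => (huΛ i).1) (succMin_mono hne) (by simpa using fun i => (huΛ i).2)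
  exact ⟨w, fun i => hw ▸ subset_span (mem_range_self i), hwli, hw, hwμ⟩
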